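/- arXiv:1809.06936 — 6 statements merged into one kernel-verified Lean document; each statement's English description precedes it below -/
import Mathlib

section
/- The tuple (0, 1, 2, ..., n-1) is the largest element of T_n^B all of whose entries are finite: it is a valid element, and every valid element r with (r i : ℕ) < n for all i satisfies (r i : ℕ) ≤ i for all i. -/
/-- Validity predicate for elements of the type B Tamari lattice `T_n^B`,
encoded as tuples `r : Fin n → Fin (n+1)` where the value `n` represents `∞`. -/
def ValidB (n : ℕ) (r : Fin n → Fin (n+1)) : Prop :=
  (∀ i j : Fin n, i < j → (r j : ℕ) < n → (j : ℕ) - (i : ℕ) ≤ (r j : ℕ) →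
      (r i : ℕ) ≤ (r j : ℕ) - ((j : ℕ) - (i : ℕ))) ∧
  (∀ i : Fin n, ∀ _h1 : (r i : ℕ) < n, ∀ h2 : (i : ℕ) + 1 ≤ (r i : ℕ),
      (r ⟨n + (i : ℕ) - (r i : ℕ), by have := i.isLt; omega⟩ : ℕ) = n)

theorem largest_finite_element (n : ℕ) :
    ValidB n (fun i : Fin n => (⟨(i : ℕ), by have := i.isLt; omega⟩ : Fin (n+1))) ∧
    ∀ r : Fin n → Fin (n+1), ValidB n r → (∀ i, (r i : ℕ) < n) →
      ∀ i : Fin n, (r i : ℕ) ≤ (i : ℕ) := by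
  constructor
  · constructor
    · intro i j hij _ _
      simp only []
      have : (i : ℕ) < j := hij
      omega
    · intro i _ h2
      simp only [] at h2
      omega
  · intro r hr hfin i
    by_contra h
    have h2 : (i : ℕ) + 1 ≤ (r i : ℕ) := by omega
    have := hr.2 i (hfin i) h2
    have := hfin ⟨n + (i : ℕ) - (r i : ℕ), by have := i.isLt; omega⟩
    omega
end

section
/- Any chain in T_n^B has at most n² + 1 elements: if C is a finite set of valid tuples that is totally ordered by the componentwise order, then |C| ≤ n² + 1. -/
/-!
The sum of entries (with `∞` counted as `n`) is strictly monotone for the componentwise order,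
so it is injective on any chain; it takes values in `{0, …, n²}`, which has `n² + 1` elements.
-/

open Finset

theorem StrictMono.injOn_of_isChain {α β : Type*} [PartialOrder α] [Preorder β] {f : α → β}
    (hf : StrictMono f) {s : Set α} (hs : IsChain (· ≤ ·) s) : s.InjOn f := by
  intro x hx y hy hxy
  by_contra hne
  rcases hs hx hy hne with h | h
  · exact (hf (h.lt_of_ne hne)).ne hxy
  · exact (hf (h.lt_of_ne (Ne.symm hne))).ne' hxy

theorem IsChain.card_le_of_strictMono {α : Type*} [PartialOrder α] {f : α → ℕ}
    (hf : StrictMono f) {C : Finset α} (hC : IsChain (· ≤ ·) (C : Set α)) {N : ℕ}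
    (hN : ∀ x ∈ C, f x ≤ N) : C.card ≤ N + 1 :=
  calc C.card ≤ (range (N + 1)).card :=
        card_le_card_of_injOn f (fun x hx => mem_range_succ_iff.2 (hN x hx))
          (hf.injOn_of_isChain hC)
    _ = N + 1 := card_range _

def entrySum {ι : Type*} [Fintype ι] {m : ℕ} (r : ι → Fin m) : ℕ := ∑ i, (r i : ℕ)

theorem entrySum_strictMono {ι : Type*} [Fintype ι] {m : ℕ} :
    StrictMono (entrySum : (ι → Fin m) → ℕ) :=
  fun r s h => Fintype.sum_strictMono (show (fun i => (r i : ℕ)) < fun i => (s i : ℕ) from h)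

theorem entrySum_le {ι : Type*} [Fintype ι] {m : ℕ} (r : ι → Fin (m + 1)) :
    entrySum r ≤ Fintype.card ι * m :=
  calc entrySum r ≤ ∑ _i : ι, m := sum_le_sum fun i _ => Fin.is_le (r i)
    _ = Fintype.card ι * m := by rw [sum_const, card_univ, smul_eq_mul]

theorem chain_card_le_general (n : ℕ) (C : Finset (Fin n → Fin (n+1)))
    (hchain : ∀ r ∈ C, ∀ s ∈ C, r ≤ s ∨ s ≤ r) :
    C.card ≤ n ^ 2 + 1 :=
  IsChain.card_le_of_strictMono entrySum_strictMono (fun r hr s hs _ => hchain r hr s hs)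
    fun r _ => by simpa [sq] using entrySum_le r

theorem chain_card_le (n : ℕ) (C : Finset (Fin n → Fin (n+1)))
    (hval : ∀ r ∈ C, ValidB n r)
    (hchain : ∀ r ∈ C, ∀ s ∈ C, r ≤ s ∨ s ≤ r) :
    C.card ≤ n ^ 2 + 1 :=
  chain_card_le_general n C hchain
end

section
/- There exists a chain in T_n^B with exactly n² + 1 elements, namely the chain starting at (0,...,0) that repeatedly increases the rightmost non-∞ entry by 1 (where increasing n-1 yields ∞). Formally: there is a strictly increasing sequence of n² + 1 valid tuples under the componentwise order. -/
/-- Value at position `i` of the `k`-th element of the chain. -/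
def chainVal (n k i : ℕ) : ℕ :=
  if n ≤ i + k / n then n else if i + k / n + 1 = n then k % n else 0

lemma chainVal_le (n k i : ℕ) (hn : 0 < n) : chainVal n k i ≤ n := by
  have := Nat.mod_lt k hn
  unfold chainVal; split_ifs <;> omega

lemma chainVal_mono {k k' : ℕ} (n i : ℕ) (hn : 0 < n) (h : k ≤ k') :
    chainVal n k i ≤ chainVal n k' i := by
  have hq : k / n ≤ k' / n := Nat.div_le_div_right h
  have hm := Nat.mod_lt k hn
  have hm' := Nat.mod_lt k' hn
  unfold chainVal
  split_ifs with a b c d e <;> try omega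
  · -- both in the middle branch: quotients equal
    have hqq : k / n = k' / n := by omega
    have h1 := Nat.div_add_mod k n
    have h2 := Nat.div_add_mod k' n
    rw [hqq] at h1
    omega

lemma chainVal_succ_lt {n k : ℕ} (hk : k < n ^ 2) :
    chainVal n k (n - 1 - k / n) < chainVal n (k + 1) (n - 1 - k / n) := by
  have hn : 0 < n := by nlinarith
  have hq : k / n < n := Nat.div_lt_of_lt_mul (by nlinarith)
  set i := n - 1 - k / n with hi
  have hiq : i + k / n + 1 = n := by omega
  have hval : chainVal n k i = k % n := by
    unfold chainVal
    rw [if_neg (by omega), if_pos hiq]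
  have hm := Nat.mod_lt k hn
  have hq1 : k / n ≤ (k + 1) / n := Nat.div_le_div_right (by omega)
  have hq2 : (k + 1) / n ≤ (k + n) / n := Nat.div_le_div_right (by omega)
  have hq3 : (k + n) / n = k / n + 1 := Nat.add_div_right _ hn
  rw [hval]
  unfold chainVal
  split_ifs with a b
  · omega
  · -- (k+1)/n = k/n, so (k+1)%n = k%n + 1
    have hqq : (k + 1) / n = k / n := by omega
    have h1 := Nat.div_add_mod k n
    have h2 := Nat.div_add_mod (k + 1) n
    rw [hqq] at h2
    omega
  · omega

theorem exists_long_chain (n : ℕ) :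
    ∃ f : Fin (n ^ 2 + 1) → (Fin n → Fin (n+1)),
      (∀ k, ValidB n (f k)) ∧ StrictMono f := by
  refine ⟨fun k i => ⟨chainVal n k i, by
    have := chainVal_le n k i i.pos; omega⟩, ?_, ?_⟩
  · intro k
    constructor
    · intro i j hij hjn hji
      have hij' : (i : ℕ) < (j : ℕ) := hij
      have hm : (k : ℕ) % n < n := Nat.mod_lt _ i.pos
      simp only [chainVal] at *
      split_ifs at * <;> omega
    · intro i h1 h2
      have hm : (k : ℕ) % n < n := Nat.mod_lt _ i.pos
      have h1' : chainVal n (k : ℕ) (i : ℕ) < n := h1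
      have h2' : (i : ℕ) + 1 ≤ chainVal n (k : ℕ) (i : ℕ) := h2
      show chainVal n (k : ℕ) (n + (i : ℕ) - chainVal n (k : ℕ) (i : ℕ)) = n
      unfold chainVal at *
      split_ifs at h1' h2' with a b
      · omega
      · rw [if_neg a, if_pos b, if_pos (by omega)]
      · omega
  · rw [Fin.strictMono_iff_lt_succ]
    intro k
    have hk : (k : ℕ) < n ^ 2 := k.isLt
    have hn : 0 < n := by nlinarith
    rw [Pi.lt_def]
    constructor
    · intro i
      show chainVal n (k : ℕ) (i : ℕ) ≤ chainVal n ((k : ℕ) + 1) (i : ℕ)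
      exact chainVal_mono n i hn (by omega)
    · have hq : (k : ℕ) / n < n := Nat.div_lt_of_lt_mul (by nlinarith)
      refine ⟨⟨n - 1 - (k : ℕ) / n, by
        clear hk; generalize (k : ℕ) / n = q at hq; omega⟩, ?_⟩
      show chainVal n (k : ℕ) _ < chainVal n ((k : ℕ) + 1) _
      exact chainVal_succ_lt hk
end

section
/- For n ≥ 4, T_n^B contains two disjoint chains whose union has at least 2n² - 3 elements: one chain of n² + 1 elements and a disjoint chain of n² - 4 elements. -/
def gC (n q s : ℕ) : Fin n → Fin (n+1) := fun i =>
  ⟨if n - q ≤ (i : ℕ) then n else if (i : ℕ) = n - 1 - q then min n s else 0, by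
    split_ifs <;> omega⟩

def vC (n u v : ℕ) : Fin n → Fin (n+1) := fun k =>
  ⟨min n ((k : ℕ) + u + v + (if n - 1 ≤ (k : ℕ) + u then 1 else 0) - n), by omega⟩

def spC (n : ℕ) : Fin n → Fin (n+1) := fun k =>
  ⟨if (k : ℕ) = n - 2 then min n 1 else 0, by split_ifs <;> omega⟩

lemma valid_g (n q s : ℕ) (hq : q ≤ n) (hs : s < n) : ValidB n (gC n q s) := by
  constructor
  · intro i j hij hjn hji
    have hi := i.isLt; have hj := j.isLt
    have hij' : (i : ℕ) < (j : ℕ) := hij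
    simp only [gC] at hjn hji ⊢
    split_ifs at hjn hji ⊢ <;> omega
  · intro i h1 h2
    have hi := i.isLt
    simp only [gC] at h1 h2 ⊢
    split_ifs at h1 h2 ⊢ <;> omega

lemma valid_v (n u v : ℕ) (hu : u < n) (hv1 : 1 ≤ v) (hv2 : v ≤ n) : ValidB n (vC n u v) := by
  constructor
  · intro i j hij hjn hji
    have hi := i.isLt; have hj := j.isLt
    have hij' : (i : ℕ) < (j : ℕ) := hij
    simp only [vC] at hjn hji ⊢
    split_ifs at hjn hji ⊢ <;> omega
  · intro i h1 h2
    have hi := i.isLt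
    simp only [vC] at h1 h2 ⊢
    split_ifs at h1 h2 ⊢ <;> omega

lemma valid_sp (n : ℕ) (hn : 4 ≤ n) : ValidB n (spC n) := by
  constructor
  · intro i j hij hjn hji
    have hi := i.isLt; have hj := j.isLt
    have hij' : (i : ℕ) < (j : ℕ) := hij
    simp only [spC] at hjn hji ⊢
    split_ifs at hjn hji ⊢ <;> omega
  · intro i h1 h2
    have hi := i.isLt
    simp only [spC] at h1 h2 ⊢
    split_ifs at h1 h2 ⊢ <;> omega

lemma g_le (n q s q' s' : ℕ) (hq' : q' ≤ n)
    (h : q < q' ∨ (q = q' ∧ s ≤ s')) : gC n q s ≤ gC n q' s' := by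
  rw [Pi.le_def]
  intro k
  rw [Fin.le_def]
  have hk := k.isLt
  simp only [gC]
  split_ifs <;> omega

lemma v_le (n u v u' v' : ℕ)
    (h : u + v < u' + v' ∨ (u + v = u' + v' ∧ u ≤ u')) : vC n u v ≤ vC n u' v' := by
  rw [Pi.le_def]
  intro k
  rw [Fin.le_def]
  have hk := k.isLt
  simp only [vC]
  split_ifs <;> omega

lemma sp_le_v (n u v : ℕ) (hn : 4 ≤ n) (hv1 : 1 ≤ v)
    (h2 : 2 ≤ u + v) (h0 : u = 0 → 3 ≤ v) : spC n ≤ vC n u v := by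
  rw [Pi.le_def]
  intro k
  rw [Fin.le_def]
  have hk := k.isLt
  simp only [spC, vC]
  split_ifs <;> omega

lemma v_ne (n u v u' v' : ℕ) (hn : 4 ≤ n) (hu : u < n) (hu' : u' < n)
    (hv1 : 1 ≤ v) (hv2 : v ≤ n) (hv1' : 1 ≤ v') (hv2' : v' ≤ n)
    (h : u + v < u' + v' ∨ (u + v = u' + v' ∧ u < u')) : vC n u v ≠ vC n u' v' := by
  intro heq
  rcases h with h | ⟨hc, hu2⟩
  · rcases le_or_gt (u' + v') n with hc | hc
    · have h1 := congrFun heq (⟨n - 1, by omega⟩ : Fin n)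
      rw [Fin.ext_iff] at h1
      simp only [vC] at h1
      split_ifs at h1 <;> omega
    · have h1 := congrFun heq (⟨2 * n - 1 - (u' + v'), by omega⟩ : Fin n)
      rw [Fin.ext_iff] at h1
      simp only [vC] at h1
      split_ifs at h1 <;> omega
  · have h1 := congrFun heq (⟨n - 1 - u', by omega⟩ : Fin n)
    rw [Fin.ext_iff] at h1
    simp only [vC] at h1
    split_ifs at h1 <;> omega

lemma g_ne (n q s q' s' : ℕ) (hn : 4 ≤ n) (hq : q ≤ n) (hq' : q' ≤ n) (hs : s < n) (hs' : s' < n)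
    (h : q < q' ∨ (q = q' ∧ q < n ∧ s < s')) : gC n q s ≠ gC n q' s' := by
  intro heq
  rcases h with h | ⟨hc, hqn, hss⟩
  · have h1 := congrFun heq (⟨n - q', by omega⟩ : Fin n)
    rw [Fin.ext_iff] at h1
    simp only [gC] at h1
    split_ifs at h1 <;> omega
  · have h1 := congrFun heq (⟨n - 1 - q, by omega⟩ : Fin n)
    rw [Fin.ext_iff] at h1
    simp only [gC] at h1
    split_ifs at h1 <;> omega

lemma sp_ne_v (n u v : ℕ) (hn : 4 ≤ n) (hv1 : 1 ≤ v) : spC n ≠ vC n u v := by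
  intro heq
  have h1 := congrFun heq (⟨n - 1, by omega⟩ : Fin n)
  rw [Fin.ext_iff] at h1
  simp only [spC, vC] at h1
  split_ifs at h1 <;> omega

lemma g_ne_sp (n q s : ℕ) (hn : 4 ≤ n) (hq : q ≤ n) (hs : s < n) : gC n q s ≠ spC n := by
  intro heq
  have h1 := congrFun heq (⟨n - 2, by omega⟩ : Fin n)
  have h2 := congrFun heq (⟨n - 1, by omega⟩ : Fin n)
  rw [Fin.ext_iff] at h1 h2
  simp only [spC, gC] at h1 h2
  split_ifs at h1 h2 <;> omega

lemma g_ne_v (n q s u v : ℕ) (hn : 4 ≤ n) (hq : q ≤ n) (hs : s < n) (hu : u < n)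
    (hv1 : 1 ≤ v) (hv2 : v ≤ n) (h0 : u = 0 → 3 ≤ v) (htop : u + v ≤ 2 * n - 3) :
    gC n q s ≠ vC n u v := by
  intro heq
  rcases Nat.lt_or_ge (u + v) n with hc | hc
  · have h1 := congrFun heq (⟨n - 2, by omega⟩ : Fin n)
    have h2 := congrFun heq (⟨n - 1, by omega⟩ : Fin n)
    rw [Fin.ext_iff] at h1 h2
    simp only [gC, vC] at h1 h2
    split_ifs at h1 h2 <;> omega
  · rcases Nat.eq_or_lt_of_le hc with hc2 | hc2
    · have h1 := congrFun heq (⟨1, by omega⟩ : Fin n)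
      have h2 := congrFun heq (⟨n - 2, by omega⟩ : Fin n)
      rw [Fin.ext_iff] at h1 h2
      simp only [gC, vC] at h1 h2
      split_ifs at h1 h2 <;> omega
    · have h1 := congrFun heq (⟨0, by omega⟩ : Fin n)
      have h2 := congrFun heq (⟨2 * n - 2 - (u + v), by omega⟩ : Fin n)
      rw [Fin.ext_iff] at h1 h2
      simp only [gC, vC] at h1 h2
      split_ifs at h1 h2 <;> omega


theorem two_disjoint_chains (n : ℕ) (hn : 4 ≤ n) :
    ∃ C₁ C₂ : Finset (Fin n → Fin (n+1)),
      (∀ r ∈ C₁, ValidB n r) ∧ (∀ r ∈ C₂, ValidB n r) ∧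
      IsChain (· ≤ ·) (C₁ : Set (Fin n → Fin (n+1))) ∧
      IsChain (· ≤ ·) (C₂ : Set (Fin n → Fin (n+1))) ∧
      Disjoint C₁ C₂ ∧
      C₁.card = n ^ 2 + 1 ∧ C₂.card = n ^ 2 - 4 ∧
      (C₁ ∪ C₂).card ≥ 2 * n ^ 2 - 3 := by
  classical
  set bad : Finset (ℕ × ℕ) :=
    {(0,1), (0,2), (n-1,n), (n-2,n), (n-1,n-1)} with hbad
  set S1 : Finset (ℕ × ℕ) := insert (n,0) (Finset.range n ×ˢ Finset.range n) with hS1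
  set S2 : Finset (ℕ × ℕ) := (Finset.range n ×ˢ Finset.Icc 1 n) \ bad with hS2
  have hS1mem : ∀ p ∈ S1, p.1 ≤ n ∧ p.2 < n := by
    intro p hp
    rw [hS1, Finset.mem_insert, Finset.mem_product, Finset.mem_range, Finset.mem_range] at hp
    rcases hp with rfl | ⟨h1, h2⟩
    · exact ⟨le_refl n, by omega⟩
    · exact ⟨le_of_lt h1, h2⟩
  have hS1mem' : ∀ p ∈ S1, p.1 = n → p.2 = 0 := by
    intro p hp
    rw [hS1, Finset.mem_insert, Finset.mem_product, Finset.mem_range, Finset.mem_range] at hp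
    rcases hp with rfl | ⟨h1, h2⟩
    · exact fun _ => rfl
    · intro h; omega
  have hS2mem : ∀ p ∈ S2, p.1 < n ∧ 1 ≤ p.2 ∧ p.2 ≤ n ∧ (p.1 = 0 → 3 ≤ p.2) ∧
      p.1 + p.2 ≤ 2*n-3 ∧ 2 ≤ p.1 + p.2 := by
    intro p hp
    obtain ⟨u, v⟩ := p
    rw [hS2, Finset.mem_sdiff, Finset.mem_product, Finset.mem_range, Finset.mem_Icc] at hp
    obtain ⟨⟨h1, h2, h3⟩, h4⟩ := hp
    rw [hbad] at h4
    simp only [Finset.mem_insert, Finset.mem_singleton, Prod.mk.injEq] at h4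
    push_neg at h4
    obtain ⟨c1, c2, c3, c4, c5⟩ := h4
    refine ⟨h1, h2, h3, ?_, ?_, ?_⟩ <;> simp only [] <;> omega
  set A : Finset (Fin n → Fin (n+1)) := S1.image (fun p => gC n p.1 p.2) with hA
  set B : Finset (Fin n → Fin (n+1)) :=
    insert (spC n) (S2.image (fun p => vC n p.1 p.2)) with hB
  have hdisj : Disjoint A B := by
    rw [Finset.disjoint_left]
    intro x hx hx2
    rw [hA, Finset.mem_image] at hx
    obtain ⟨p, hp, rfl⟩ := hx
    obtain ⟨hb1, hb2⟩ := hS1mem p hp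
    rw [hB, Finset.mem_insert] at hx2
    rcases hx2 with heq | hmem
    · exact g_ne_sp n p.1 p.2 hn hb1 hb2 heq
    · rw [Finset.mem_image] at hmem
      obtain ⟨p', hp', heq⟩ := hmem
      obtain ⟨h1, h2, h3, h4, h5, h6⟩ := hS2mem p' hp'
      exact g_ne_v n p.1 p.2 p'.1 p'.2 hn hb1 hb2 h1 h2 h3 h4 h5 heq.symm
  have hcard1 : A.card = n ^ 2 + 1 := by
    rw [hA, Finset.card_image_of_injOn]
    · rw [hS1, Finset.card_insert_of_notMem, Finset.card_product, Finset.card_range]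
      · have h16 : 4*4 ≤ n*n := Nat.mul_le_mul hn hn
        have hp2 : n^2 = n*n := pow_two n
        rw [hp2]
      · simp
    · intro p hp p' hp' heq
      rcases Nat.lt_trichotomy p.1 p'.1 with h | h | h
      · exact absurd heq (g_ne n p.1 p.2 p'.1 p'.2 hn (hS1mem p hp).1 (hS1mem p' hp').1
          (hS1mem p hp).2 (hS1mem p' hp').2 (Or.inl h))
      · rcases Nat.lt_trichotomy p.2 p'.2 with h2 | h2 | h2
        · by_cases hq : p.1 = n
          · have e1 := hS1mem' p hp hq
            have e2 := hS1mem' p' hp' (h ▸ hq)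
            omega
          · exact absurd heq (g_ne n p.1 p.2 p'.1 p'.2 hn (hS1mem p hp).1 (hS1mem p' hp').1
              (hS1mem p hp).2 (hS1mem p' hp').2
              (Or.inr ⟨h, lt_of_le_of_ne (hS1mem p hp).1 hq, h2⟩))
        · exact Prod.ext h h2
        · by_cases hq : p'.1 = n
          · have e1 := hS1mem' p' hp' hq
            have e2 := hS1mem' p hp (h ▸ hq)
            omega
          · exact absurd heq.symm (g_ne n p'.1 p'.2 p.1 p.2 hn (hS1mem p' hp').1 (hS1mem p hp).1
              (hS1mem p' hp').2 (hS1mem p hp).2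
              (Or.inr ⟨h.symm, lt_of_le_of_ne (hS1mem p' hp').1 hq, h2⟩))
      · exact absurd heq.symm (g_ne n p'.1 p'.2 p.1 p.2 hn (hS1mem p' hp').1 (hS1mem p hp).1
          (hS1mem p' hp').2 (hS1mem p hp).2 (Or.inl h))
  have hcard2 : B.card = n ^ 2 - 4 := by
    have hsp_not : spC n ∉ S2.image (fun p => vC n p.1 p.2) := by
      rw [Finset.mem_image]
      rintro ⟨p, hp, heq⟩
      exact sp_ne_v n p.1 p.2 hn (hS2mem p hp).2.1 heq.symm
    rw [hB, Finset.card_insert_of_notMem hsp_not, Finset.card_image_of_injOn]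
    · have c1 : ((0:ℕ),(1:ℕ)) ∉ ({(0,2),(n-1,n),(n-2,n),(n-1,n-1)} : Finset (ℕ×ℕ)) := by
        simp only [Finset.mem_insert, Finset.mem_singleton, Prod.mk.injEq]; omega
      have c2 : ((0:ℕ),(2:ℕ)) ∉ ({(n-1,n),(n-2,n),(n-1,n-1)} : Finset (ℕ×ℕ)) := by
        simp only [Finset.mem_insert, Finset.mem_singleton, Prod.mk.injEq]; omega
      have c3 : (n-1,n) ∉ ({(n-2,n),(n-1,n-1)} : Finset (ℕ×ℕ)) := by
        simp only [Finset.mem_insert, Finset.mem_singleton, Prod.mk.injEq]; omega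
      have c4 : (n-2,n) ∉ ({(n-1,n-1)} : Finset (ℕ×ℕ)) := by
        simp only [Finset.mem_singleton, Prod.mk.injEq]; omega
      have hbadcard : bad.card = 5 := by
        rw [hbad, Finset.card_insert_of_notMem c1, Finset.card_insert_of_notMem c2,
          Finset.card_insert_of_notMem c3, Finset.card_insert_of_notMem c4,
          Finset.card_singleton]
      have hsub : bad ⊆ Finset.range n ×ˢ Finset.Icc 1 n := by
        intro p hp
        rw [hbad] at hp
        simp only [Finset.mem_insert, Finset.mem_singleton] at hp
        rw [Finset.mem_product, Finset.mem_range, Finset.mem_Icc]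
        rcases hp with rfl | rfl | rfl | rfl | rfl <;> simp <;> omega
      rw [hS2, Finset.card_sdiff_of_subset hsub, Finset.card_product, Finset.card_range,
        Nat.card_Icc, hbadcard]
      have hsimp : n + 1 - 1 = n := by omega
      rw [hsimp]
      have h16 : 4*4 ≤ n*n := Nat.mul_le_mul hn hn
      have hp2 : n^2 = n*n := pow_two n
      rw [hp2]
      generalize n*n = m at h16 ⊢
      omega
    · intro p hp p' hp' heq
      obtain ⟨h1, h2, h3, h4, h5, h6⟩ := hS2mem p hp
      obtain ⟨h1', h2', h3', h4', h5', h6'⟩ := hS2mem p' hp'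
      rcases Nat.lt_trichotomy (p.1 + p.2) (p'.1 + p'.2) with h | h | h
      · exact absurd heq (v_ne n p.1 p.2 p'.1 p'.2 hn h1 h1' h2 h3 h2' h3' (Or.inl h))
      · rcases Nat.lt_trichotomy p.1 p'.1 with hh | hh | hh
        · exact absurd heq (v_ne n p.1 p.2 p'.1 p'.2 hn h1 h1' h2 h3 h2' h3' (Or.inr ⟨h, hh⟩))
        · exact Prod.ext hh (by omega)
        · exact absurd heq.symm
            (v_ne n p'.1 p'.2 p.1 p.2 hn h1' h1 h2' h3' h2 h3 (Or.inr ⟨h.symm, hh⟩))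
      · exact absurd heq.symm
          (v_ne n p'.1 p'.2 p.1 p.2 hn h1' h1 h2' h3' h2 h3 (Or.inl h))
  refine ⟨A, B, ?_, ?_, ?_, ?_, hdisj, hcard1, hcard2, ?_⟩
  · intro r hr
    rw [hA, Finset.mem_image] at hr
    obtain ⟨p, hp, rfl⟩ := hr
    obtain ⟨h1, h2⟩ := hS1mem p hp
    exact valid_g n p.1 p.2 h1 h2
  · intro r hr
    rw [hB, Finset.mem_insert] at hr
    rcases hr with rfl | hr
    · exact valid_sp n hn
    · rw [Finset.mem_image] at hr
      obtain ⟨p, hp, rfl⟩ := hr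
      obtain ⟨h1, h2, h3, _⟩ := hS2mem p hp
      exact valid_v n p.1 p.2 h1 h2 h3
  · intro x hx y hy _
    rw [hA] at hx hy
    simp only [Finset.coe_image, Set.mem_image, Finset.mem_coe] at hx hy
    obtain ⟨p, hp, rfl⟩ := hx
    obtain ⟨p', hp', rfl⟩ := hy
    rcases Nat.lt_trichotomy p.1 p'.1 with h | h | h
    · exact Or.inl (g_le n p.1 p.2 p'.1 p'.2 (hS1mem p' hp').1 (Or.inl h))
    · rcases le_total p.2 p'.2 with h2 | h2
      · exact Or.inl (g_le n p.1 p.2 p'.1 p'.2 (hS1mem p' hp').1 (Or.inr ⟨h, h2⟩))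
      · exact Or.inr (g_le n p'.1 p'.2 p.1 p.2 (hS1mem p hp).1 (Or.inr ⟨h.symm, h2⟩))
    · exact Or.inr (g_le n p'.1 p'.2 p.1 p.2 (hS1mem p hp).1 (Or.inl h))
  · intro x hx y hy hne
    rw [hB] at hx hy
    simp only [Finset.coe_insert, Set.mem_insert_iff, Finset.coe_image, Set.mem_image,
      Finset.mem_coe] at hx hy
    rcases hx with rfl | ⟨p, hp, rfl⟩
    · rcases hy with rfl | ⟨p', hp', rfl⟩
      · exact absurd rfl hne
      · obtain ⟨h1, h2, h3, h4, h5, h6⟩ := hS2mem p' hp'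
        exact Or.inl (sp_le_v n p'.1 p'.2 hn h2 h6 h4)
    · rcases hy with rfl | ⟨p', hp', rfl⟩
      · obtain ⟨h1, h2, h3, h4, h5, h6⟩ := hS2mem p hp
        exact Or.inr (sp_le_v n p.1 p.2 hn h2 h6 h4)
      · rcases Nat.lt_trichotomy (p.1 + p.2) (p'.1 + p'.2) with h | h | h
        · exact Or.inl (v_le n p.1 p.2 p'.1 p'.2 (Or.inl h))
        · rcases le_total p.1 p'.1 with h2 | h2
          · exact Or.inl (v_le n p.1 p.2 p'.1 p'.2 (Or.inr ⟨h, h2⟩))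
          · exact Or.inr (v_le n p'.1 p'.2 p.1 p.2 (Or.inr ⟨h.symm, h2⟩))
        · exact Or.inr (v_le n p'.1 p'.2 p.1 p.2 (Or.inl h))
  · rw [Finset.card_union_of_disjoint hdisj, hcard1, hcard2]
    have h16 : 4*4 ≤ n*n := Nat.mul_le_mul hn hn
    have hp2 : n^2 = n*n := pow_two n
    rw [hp2]
    generalize n*n = m at h16 ⊢
    omega
end

section
/- For n ≥ 4, any union of two chains in T_n^B has at most 2n² - 3 elements: if C₁ and C₂ are chains of valid tuples under the componentwise order, then |C₁ ∪ C₂| ≤ 2n² - 3. -/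
namespace TamariB

open Finset

variable {n : ℕ}

def sumv (n : ℕ) (r : Fin n → Fin (n+1)) : ℕ := ∑ i, (r i : ℕ)

lemma coord_le (r : Fin n → Fin (n+1)) (i : Fin n) : (r i : ℕ) ≤ n :=
  Nat.lt_succ_iff.mp (r i).isLt

lemma sumv_le_sumv {r s : Fin n → Fin (n+1)} (h : r ≤ s) : sumv n r ≤ sumv n s :=
  Finset.sum_le_sum fun i _ => Fin.le_def.mp (h i)

lemma sumv_lt_sumv {r s : Fin n → Fin (n+1)} (h : r ≤ s) (hne : r ≠ s) :
    sumv n r < sumv n s := by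
  obtain ⟨i, hi⟩ := Function.ne_iff.mp hne
  exact Finset.sum_lt_sum (fun i _ => Fin.le_def.mp (h i))
    ⟨i, Finset.mem_univ i, lt_of_le_of_ne (Fin.le_def.mp (h i))
      (fun hv => hi (Fin.ext hv))⟩

lemma chain_le {C : Finset (Fin n → Fin (n+1))}
    (hc : IsChain (· ≤ ·) (C : Set (Fin n → Fin (n+1))))
    {x y : Fin n → Fin (n+1)} (hx : x ∈ C) (hy : y ∈ C)
    (h : sumv n x < sumv n y) : x ≤ y := by
  rcases eq_or_ne x y with rfl | hne
  · exact le_refl x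
  rcases hc (Finset.mem_coe.mpr hx) (Finset.mem_coe.mpr hy) hne with h' | h'
  · exact h'
  · exact absurd (sumv_le_sumv h') (by omega)

lemma chain_injOn {C : Finset (Fin n → Fin (n+1))}
    (hc : IsChain (· ≤ ·) (C : Set (Fin n → Fin (n+1)))) :
    Set.InjOn (sumv n) C := by
  intro x hx y hy hf
  by_contra hne
  rcases hc hx hy hne with h | h
  · exact absurd (sumv_lt_sumv h hne) (by omega)
  · exact absurd (sumv_lt_sumv h (Ne.symm hne)) (by omega)

lemma sumv_def_eq (r : Fin n → Fin (n+1)) :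
    sumv n r + (∑ i, (n - (r i : ℕ))) = n * n := by
  rw [sumv, ← Finset.sum_add_distrib]
  have h : ∀ i ∈ Finset.univ, ((r i : ℕ) + (n - (r i : ℕ))) = n := fun i _ => by
    have := coord_le r i; omega
  rw [Finset.sum_congr rfl h]
  simp [Finset.card_univ, mul_comm]

lemma sumv_le_sq (r : Fin n → Fin (n+1)) : sumv n r ≤ n * n := by
  have := sumv_def_eq r; omega


lemma top2 (hn : 4 ≤ n) {r : Fin n → Fin (n+1)} (hv : ValidB n r) (j : Fin n)
    (hj : 1 ≤ (j : ℕ)) (hrj : (r j : ℕ) < n) : sumv n r + 3 ≤ n * n := by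
  have hdef := sumv_def_eq r
  rcases Nat.eq_zero_or_pos (r j : ℕ) with h0 | h1
  · have hsingle : (n - (r j : ℕ)) ≤ ∑ i, (n - (r i : ℕ)) :=
      Finset.single_le_sum (f := fun i => n - (r i : ℕ)) (fun i _ => Nat.zero_le _)
        (Finset.mem_univ j)
    omega
  · have hjlt := j.isLt
    set i : Fin n := ⟨(j : ℕ) - 1, by omega⟩ with hi
    have hival : (i : ℕ) = (j : ℕ) - 1 := rfl
    have hij : i < j := by rw [Fin.lt_def]; omega
    have hcond := hv.1 i j hij hrj (by omega)
    have hine : i ≠ j := Fin.ne_of_val_ne (by omega)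
    have hpair : (n - (r i : ℕ)) + (n - (r j : ℕ)) ≤ ∑ i, (n - (r i : ℕ)) := by
      have := Finset.sum_le_sum_of_subset
        (f := fun i => n - (r i : ℕ)) (Finset.subset_univ ({i, j} : Finset (Fin n)))
      rwa [Finset.sum_pair hine] at this
    omega

lemma top3 (hn : 4 ≤ n) {r : Fin n → Fin (n+1)} (hv : ValidB n r) (j : Fin n)
    (hj : 2 ≤ (j : ℕ)) (hrj : (r j : ℕ) < n) : sumv n r + 4 ≤ n * n := by
  have hdef := sumv_def_eq r
  have hjlt := j.isLt
  set i1 : Fin n := ⟨(j : ℕ) - 1, by omega⟩ with hi1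
  set i2 : Fin n := ⟨(j : ℕ) - 2, by omega⟩ with hi2
  have hi1v : (i1 : ℕ) = (j : ℕ) - 1 := rfl
  have hi2v : (i2 : ℕ) = (j : ℕ) - 2 := rfl
  have h1j : i1 ≠ j := Fin.ne_of_val_ne (by omega)
  have h21 : i2 ≠ i1 := Fin.ne_of_val_ne (by omega)
  have h2j : i2 ≠ j := Fin.ne_of_val_ne (by omega)
  rcases Nat.lt_or_ge (r j : ℕ) 2 with h01 | h2
  · rcases Nat.lt_or_ge (r j : ℕ) 1 with h0 | h1
    · have hsingle : (n - (r j : ℕ)) ≤ ∑ i, (n - (r i : ℕ)) :=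
        Finset.single_le_sum (f := fun i => n - (r i : ℕ)) (fun i _ => Nat.zero_le _)
          (Finset.mem_univ j)
      omega
    · have hcond := hv.1 i1 j (by rw [Fin.lt_def]; omega) hrj (by omega)
      have hsingle : (n - (r i1 : ℕ)) ≤ ∑ i, (n - (r i : ℕ)) :=
        Finset.single_le_sum (f := fun i => n - (r i : ℕ)) (fun i _ => Nat.zero_le _)
          (Finset.mem_univ i1)
      omega
  · have hcond1 := hv.1 i1 j (by rw [Fin.lt_def]; omega) hrj (by omega)
    have hcond2 := hv.1 i2 j (by rw [Fin.lt_def]; omega) hrj (by omega)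
    have hmem : i2 ∉ ({i1, j} : Finset (Fin n)) := by
      simp [Finset.mem_insert, Finset.mem_singleton, h21, h2j]
    have htrip : (n - (r i2 : ℕ)) + ((n - (r i1 : ℕ)) + (n - (r j : ℕ)))
        ≤ ∑ i, (n - (r i : ℕ)) := by
      have := Finset.sum_le_sum_of_subset
        (f := fun i => n - (r i : ℕ)) (Finset.subset_univ ({i2, i1, j} : Finset (Fin n)))
      rwa [Finset.sum_insert hmem, Finset.sum_pair h1j] at this
    omega

lemma high_coords (hn : 4 ≤ n) {r : Fin n → Fin (n+1)} (hv : ValidB n r)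
    (hge : n * n - 2 ≤ sumv n r) (j : Fin n) (hj : 1 ≤ (j : ℕ)) : (r j : ℕ) = n := by
  by_contra h
  have hlt : (r j : ℕ) < n := lt_of_le_of_ne (coord_le r j) h
  have := top2 hn hv j hj hlt
  have h16 : 16 ≤ n * n := Nat.mul_le_mul hn hn
  omega

lemma coord_eq_n_of_ge2 (hn : 4 ≤ n) {r : Fin n → Fin (n+1)} (hv : ValidB n r)
    (hge : n * n - 3 ≤ sumv n r) (j : Fin n) (hj : 2 ≤ (j : ℕ)) : (r j : ℕ) = n := by
  by_contra h
  have hlt : (r j : ℕ) < n := lt_of_le_of_ne (coord_le r j) h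
  have := top3 hn hv j hj hlt
  have h16 : 16 ≤ n * n := Nat.mul_le_mul hn hn
  omega

lemma eq_of_sumv_zero {x y : Fin n → Fin (n+1)} (hx : sumv n x = 0) (hy : sumv n y = 0) :
    x = y := by
  funext j
  have hx' := (Finset.sum_eq_zero_iff.mp hx) j (Finset.mem_univ j)
  have hy' := (Finset.sum_eq_zero_iff.mp hy) j (Finset.mem_univ j)
  exact Fin.ext (by omega)

lemma eq_of_sumv_high (hn : 4 ≤ n) {x y : Fin n → Fin (n+1)}
    (hvx : ValidB n x) (hvy : ValidB n y) (hxy : sumv n x = sumv n y)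
    (hhigh : n * n - 2 ≤ sumv n x) : x = y := by
  have hn0 : 0 < n := by omega
  set z : Fin n := ⟨0, hn0⟩ with hz
  have hxe : (∑ i ∈ Finset.univ.erase z, (x i : ℕ)) + (x z : ℕ) = sumv n x :=
    Finset.sum_erase_add _ _ (Finset.mem_univ z)
  have hye : (∑ i ∈ Finset.univ.erase z, (y i : ℕ)) + (y z : ℕ) = sumv n y :=
    Finset.sum_erase_add _ _ (Finset.mem_univ z)
  have hcong : ∀ i ∈ Finset.univ.erase z, (x i : ℕ) = (y i : ℕ) := by
    intro i hi
    have hiz : i ≠ z := (Finset.mem_erase.mp hi).1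
    have hival : 1 ≤ (i : ℕ) := by
      rcases Nat.eq_zero_or_pos (i : ℕ) with h | h
      · exact absurd (Fin.ext h : i = z) hiz
      · exact h
    rw [high_coords hn hvx hhigh i hival, high_coords hn hvy (hxy ▸ hhigh) i hival]
  have hsum : (∑ i ∈ Finset.univ.erase z, (x i : ℕ)) = ∑ i ∈ Finset.univ.erase z, (y i : ℕ) :=
    Finset.sum_congr rfl hcong
  have hz0 : (x z : ℕ) = (y z : ℕ) := by omega
  funext j
  rcases Nat.eq_zero_or_pos (j : ℕ) with h | h
  · have : j = z := Fin.ext h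
    rw [this]; exact Fin.ext hz0
  · exact Fin.ext (by
      rw [high_coords hn hvx hhigh j h, high_coords hn hvy (hxy ▸ hhigh) j h])

lemma exists_support {x : Fin n → Fin (n+1)} (h : sumv n x = 1) :
    ∃ k, (x k : ℕ) = 1 ∧ ∀ i, i ≠ k → (x i : ℕ) = 0 := by
  have hne : ∃ k, (x k : ℕ) ≠ 0 := by
    by_contra hall
    push_neg at hall
    have : sumv n x = 0 := Finset.sum_eq_zero (fun i _ => hall i)
    omega
  obtain ⟨k, hk⟩ := hne
  have h' : ∑ l, (x l : ℕ) = 1 := h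
  have hk1 : (x k : ℕ) ≤ ∑ l, (x l : ℕ) :=
    Finset.single_le_sum (f := fun l => ((x l : ℕ))) (fun i _ => Nat.zero_le _)
      (Finset.mem_univ k)
  refine ⟨k, by omega, fun i hik => ?_⟩
  have hpair : (x i : ℕ) + (x k : ℕ) ≤ ∑ l, (x l : ℕ) := by
    have h2 : (x i : ℕ) + (x k : ℕ) = ∑ l ∈ ({i, k} : Finset (Fin n)), (x l : ℕ) :=
      (Finset.sum_pair (f := fun l => ((x l : ℕ))) hik).symm
    rw [h2]
    exact Finset.sum_le_sum_of_subset (Finset.subset_univ _)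
  omega


lemma atom_aux (hn : 4 ≤ n) {C : Finset (Fin n → Fin (n+1))}
    (hv : ∀ r ∈ C, ValidB n r) (hc : IsChain (· ≤ ·) (C : Set (Fin n → Fin (n+1))))
    (hcov : ∀ t, 1 ≤ t → t ≤ n * n - 3 → ∃ x ∈ C, sumv n x = t)
    (last : Fin n) (m : ℕ) (hm : 1 ≤ m) :
    ∀ t, 1 ≤ t → t ≤ n * n - 3 →
      (∀ y ∈ C, sumv n y = t → m ≤ (y last : ℕ)) →
      ∃ y ∈ C, (y last : ℕ) = m := by
  intro t
  induction t using Nat.strong_induction_on with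
  | _ t ih =>
    intro ht1 ht2 hall
    obtain ⟨y, hyC, hys⟩ := hcov t ht1 ht2
    have hlast := hall y hyC hys
    rcases eq_or_lt_of_le hlast with heq | hlt
    · exact ⟨y, hyC, heq.symm⟩
    · have hylet : (y last : ℕ) ≤ ∑ l, (y l : ℕ) :=
        Finset.single_le_sum (f := fun l => ((y l : ℕ))) (fun i _ => Nat.zero_le _)
          (Finset.mem_univ last)
      have hys' : ∑ l, (y l : ℕ) = t := hys
      have ht2' : 2 ≤ t := by omega
      obtain ⟨z, hzC, hzs⟩ := hcov (t - 1) (by omega) (by omega)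
      have hzy : z ≤ y := chain_le hc hzC hyC (by omega)
      have hEz : (∑ i ∈ Finset.univ.erase last, (z i : ℕ)) + (z last : ℕ) = t - 1 := by
        rw [Finset.sum_erase_add _ _ (Finset.mem_univ last)]; exact hzs
      have hEy : (∑ i ∈ Finset.univ.erase last, (y i : ℕ)) + (y last : ℕ) = t := by
        rw [Finset.sum_erase_add _ _ (Finset.mem_univ last)]; exact hys
      have hEle : (∑ i ∈ Finset.univ.erase last, (z i : ℕ))
          ≤ ∑ i ∈ Finset.univ.erase last, (y i : ℕ) :=
        Finset.sum_le_sum fun i _ => Fin.le_def.mp (hzy i)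
      have hzlast : m ≤ (z last : ℕ) := by omega
      refine ih (t - 1) (by omega) (by omega) (by omega) ?_
      intro w hwC hws
      have hwz : w = z := chain_injOn hc (Finset.mem_coe.mpr hwC) (Finset.mem_coe.mpr hzC)
        (hws.trans hzs.symm)
      rw [hwz]
      exact hzlast

lemma sum_one_eq (hn : 4 ≤ n) {C : Finset (Fin n → Fin (n+1))}
    (hv : ∀ r ∈ C, ValidB n r) (hc : IsChain (· ≤ ·) (C : Set (Fin n → Fin (n+1))))
    (hcov : ∀ t, 1 ≤ t → t ≤ n * n - 3 → ∃ x ∈ C, sumv n x = t)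
    {x : Fin n → Fin (n+1)} (hx : x ∈ C) (hfx : sumv n x = 1) :
    ∀ i : Fin n, (x i : ℕ) = if (i : ℕ) = n - 1 then 1 else 0 := by
  have h16 : 16 ≤ n * n := Nat.mul_le_mul hn hn
  obtain ⟨k, hk1, hk0⟩ := exists_support hfx
  obtain ⟨last, hlastval⟩ : ∃ l : Fin n, (l : ℕ) = n - 1 := ⟨⟨n - 1, by omega⟩, rfl⟩
  have hkval : (k : ℕ) = n - 1 := by
    by_contra hkne
    have hklt : (k : ℕ) < n - 1 := by have := k.isLt; omega
    set m : ℕ := n - 1 - (k : ℕ) with hm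
    have hm1 : 1 ≤ m := by omega
    have hbase : ∀ y ∈ C, sumv n y = n * n - 3 → m ≤ (y last : ℕ) := by
      intro y hyC hys
      have hcoord : (y last : ℕ) = n :=
        coord_eq_n_of_ge2 hn (hv y hyC) (by omega) last (by omega)
      omega
    obtain ⟨y, hyC, hym⟩ := atom_aux hn hv hc hcov last m hm1 (n * n - 3) (by omega)
      (le_refl _) hbase
    have hknelast : k ≠ last := Fin.ne_of_val_ne (by omega)
    have hxlast : (x last : ℕ) = 0 := hk0 last (Ne.symm hknelast)
    have hxy : x ≤ y := by
      rcases eq_or_ne x y with rfl | hne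
      · exact le_refl x
      rcases hc (Finset.mem_coe.mpr hx) (Finset.mem_coe.mpr hyC) hne with h' | h'
      · exact h'
      · exfalso
        have := Fin.le_def.mp (h' last)
        omega
    have hyv := hv y hyC
    have hklast : k < last := by rw [Fin.lt_def]; omega
    have hcond := hyv.1 k last hklast (by omega) (by omega)
    have hyk : 1 ≤ (y k : ℕ) := by
      have := Fin.le_def.mp (hxy k)
      omega
    omega
  intro i
  by_cases hi : (i : ℕ) = n - 1
  · have : i = k := Fin.ext (by omega)
    rw [if_pos hi, this]
    exact hk1
  · have : i ≠ k := fun h => hi (by rw [h, hkval])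
    rw [if_neg hi]
    exact hk0 i this

end TamariB

open Finset TamariB

theorem union_two_chains_le (n : ℕ) (hn : 4 ≤ n)
    (C₁ C₂ : Finset (Fin n → Fin (n+1)))
    (hv₁ : ∀ r ∈ C₁, ValidB n r) (hv₂ : ∀ r ∈ C₂, ValidB n r)
    (hc₁ : IsChain (· ≤ ·) (C₁ : Set (Fin n → Fin (n+1))))
    (hc₂ : IsChain (· ≤ ·) (C₂ : Set (Fin n → Fin (n+1)))) :
    (C₁ ∪ C₂).card ≤ 2 * n ^ 2 - 3 := by
  classical
  have h16 : 16 ≤ n * n := Nat.mul_le_mul hn hn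
  have hp2 : n ^ 2 = n * n := pow_two n
  set f : (Fin n → Fin (n+1)) → ℕ := sumv n with hf
  set F₁ : Finset ℕ := C₁.image f with hF1
  set F₂ : Finset ℕ := C₂.image f with hF2
  have hcard1 : F₁.card = C₁.card := Finset.card_image_of_injOn (chain_injOn hc₁)
  have hcard2 : F₂.card = C₂.card := Finset.card_image_of_injOn (chain_injOn hc₂)
  have hrange1 : F₁ ⊆ Finset.range (n * n + 1) := by
    intro t ht
    obtain ⟨x, _, rfl⟩ := Finset.mem_image.mp ht
    exact Finset.mem_range.mpr (by
      have h1 := sumv_le_sq x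
      have h2 : f x = sumv n x := rfl
      omega)
  have hrange2 : F₂ ⊆ Finset.range (n * n + 1) := by
    intro t ht
    obtain ⟨x, _, rfl⟩ := Finset.mem_image.mp ht
    exact Finset.mem_range.mpr (by
      have h1 := sumv_le_sq x
      have h2 : f x = sumv n x := rfl
      omega)
  have hFU : (F₁ ∪ F₂).card ≤ n * n + 1 := by
    have := Finset.card_le_card (Finset.union_subset hrange1 hrange2)
    simpa using this
  set T : Finset ℕ := {0, n * n - 2, n * n - 1, n * n} with hT
  have hGsub : (F₁ ∩ F₂) ∩ T ⊆ (C₁ ∩ C₂).image f := by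
    intro t ht
    obtain ⟨htF, htT⟩ := Finset.mem_inter.mp ht
    obtain ⟨ht1, ht2⟩ := Finset.mem_inter.mp htF
    obtain ⟨x, hx, hfx⟩ := Finset.mem_image.mp ht1
    obtain ⟨y, hy, hfy⟩ := Finset.mem_image.mp ht2
    have hsum : sumv n x = sumv n y := by rw [hf] at hfx hfy; omega
    have htT' : t = 0 ∨ n * n - 2 ≤ t := by
      simp only [hT, Finset.mem_insert, Finset.mem_singleton] at htT
      omega
    have hxy : x = y := by
      rcases htT' with h0 | hh
      · exact eq_of_sumv_zero (by rw [hf] at hfx; omega) (by rw [hf] at hfy; omega)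
      · exact eq_of_sumv_high hn (hv₁ x hx) (hv₂ y hy) hsum (by rw [hf] at hfx; omega)
    exact Finset.mem_image.mpr ⟨x, Finset.mem_inter.mpr ⟨hx, hxy ▸ hy⟩, hfx⟩
  have hWle : ((C₁ ∩ C₂).image f).card ≤ (C₁ ∩ C₂).card := Finset.card_image_le
  have hUC := Finset.card_union_add_card_inter C₁ C₂
  have hUF := Finset.card_union_add_card_inter F₁ F₂
  have hsplit : (F₁ ∩ F₂).card ≤ ((F₁ ∩ F₂) ∩ T).card + ((F₁ ∩ F₂) \ T).card := by
    have hsub : F₁ ∩ F₂ ⊆ ((F₁ ∩ F₂) ∩ T) ∪ ((F₁ ∩ F₂) \ T) := by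
      intro a ha
      by_cases h : a ∈ T
      · exact Finset.mem_union_left _ (Finset.mem_inter.mpr ⟨ha, h⟩)
      · exact Finset.mem_union_right _ (Finset.mem_sdiff.mpr ⟨ha, h⟩)
    exact le_trans (Finset.card_le_card hsub)
      (Finset.card_union_le ((F₁ ∩ F₂) ∩ T) ((F₁ ∩ F₂) \ T))
  by_cases hcov : Finset.Icc 1 (n * n - 3) ⊆ F₁ ∩ F₂
  · have hcov1 : ∀ t, 1 ≤ t → t ≤ n * n - 3 → ∃ x ∈ C₁, sumv n x = t := by
      intro t h1 h2
      have := (Finset.mem_inter.mp (hcov (Finset.mem_Icc.mpr ⟨h1, h2⟩))).1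
      obtain ⟨x, hx, hfx⟩ := Finset.mem_image.mp this
      exact ⟨x, hx, hfx⟩
    have hcov2 : ∀ t, 1 ≤ t → t ≤ n * n - 3 → ∃ x ∈ C₂, sumv n x = t := by
      intro t h1 h2
      have := (Finset.mem_inter.mp (hcov (Finset.mem_Icc.mpr ⟨h1, h2⟩))).2
      obtain ⟨x, hx, hfx⟩ := Finset.mem_image.mp this
      exact ⟨x, hx, hfx⟩
    obtain ⟨x₁, hx1, hfx1⟩ := hcov1 1 le_rfl (by omega)
    obtain ⟨x₂, hx2, hfx2⟩ := hcov2 1 le_rfl (by omega)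
    have he1 := sum_one_eq hn hv₁ hc₁ hcov1 hx1 hfx1
    have he2 := sum_one_eq hn hv₂ hc₂ hcov2 hx2 hfx2
    have hxx : x₁ = x₂ := funext fun i => Fin.ext (by rw [he1 i, he2 i])
    have h1mem : (1 : ℕ) ∈ (C₁ ∩ C₂).image f :=
      Finset.mem_image.mpr ⟨x₁, Finset.mem_inter.mpr ⟨hx1, hxx ▸ hx2⟩, hfx1⟩
    have h1T : (1 : ℕ) ∉ (F₁ ∩ F₂) ∩ T := by
      intro h
      have := (Finset.mem_inter.mp h).2
      simp only [hT, Finset.mem_insert, Finset.mem_singleton] at this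
      omega
    have hins : insert 1 ((F₁ ∩ F₂) ∩ T) ⊆ (C₁ ∩ C₂).image f :=
      Finset.insert_subset h1mem hGsub
    have hGge : ((F₁ ∩ F₂) ∩ T).card + 1 ≤ ((C₁ ∩ C₂).image f).card := by
      have hcc := Finset.card_le_card hins
      rw [Finset.card_insert_of_notMem h1T] at hcc
      omega
    have hdiff : ((F₁ ∩ F₂) \ T).card ≤ n * n - 3 := by
      have hsub : (F₁ ∩ F₂) \ T ⊆ Finset.Icc 1 (n * n - 3) := by
        intro s hs
        obtain ⟨hsF, hsT⟩ := Finset.mem_sdiff.mp hs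
        have hsr : s < n * n + 1 :=
          Finset.mem_range.mp (hrange1 (Finset.mem_inter.mp hsF).1)
        simp only [hT, Finset.mem_insert, Finset.mem_singleton] at hsT
        push_neg at hsT
        exact Finset.mem_Icc.mpr (by omega)
      have := Finset.card_le_card hsub
      rw [Nat.card_Icc] at this
      omega
    rw [hp2]
    omega
  · obtain ⟨t, htIcc, htF⟩ := Finset.not_subset.mp hcov
    have hGge : ((F₁ ∩ F₂) ∩ T).card ≤ ((C₁ ∩ C₂).image f).card :=
      Finset.card_le_card hGsub
    have hdiff : ((F₁ ∩ F₂) \ T).card ≤ n * n - 4 := by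
      have hsub : (F₁ ∩ F₂) \ T ⊆ (Finset.Icc 1 (n * n - 3)).erase t := by
        intro s hs
        obtain ⟨hsF, hsT⟩ := Finset.mem_sdiff.mp hs
        have hsr : s < n * n + 1 :=
          Finset.mem_range.mp (hrange1 (Finset.mem_inter.mp hsF).1)
        simp only [hT, Finset.mem_insert, Finset.mem_singleton] at hsT
        push_neg at hsT
        refine Finset.mem_erase.mpr ⟨?_, Finset.mem_Icc.mpr (by omega)⟩
        intro hst
        exact htF (hst ▸ hsF)
      have hle := Finset.card_le_card hsub
      rw [Finset.card_erase_of_mem htIcc, Nat.card_Icc] at hle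
      omega
    rw [hp2]
    omega
end

section
/- For n ≥ 4, the maximum size of a union of two chains in T_n^B equals 2n² - 3; that is, λ₁(T_n^B) + λ₂(T_n^B) = 2n² - 3 where λ₁(T_n^B) = n² + 1 and λ₂(T_n^B) = n² - 4. -/
open Finset

section Chain

variable {α β : Type*} [PartialOrder α]

theorem IsChain.le_of_apply_le [Preorder β] {f : α → β} (hf : StrictMono f) {C : Set α}
    (hC : IsChain (· ≤ ·) C) {x y : α} (hx : x ∈ C) (hy : y ∈ C) (h : f x ≤ f y) : x ≤ y := by
  rcases hC.total hx hy with hxy | hyx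
  · exact hxy
  · rcases hyx.eq_or_lt with rfl | hlt
    · exact le_rfl
    · exact absurd h (hf hlt).not_ge

theorem IsChain.injOn_of_strictMono [Preorder β] {f : α → β} (hf : StrictMono f) {C : Set α}
    (hC : IsChain (· ≤ ·) C) : Set.InjOn f C := fun _ hx _ hy h =>
  le_antisymm (hC.le_of_apply_le hf hx hy h.le) (hC.le_of_apply_le hf hy hx h.ge)

theorem isChain_image_of_monotoneOn {γ : Type*} [LinearOrder γ] {f : γ → α} {s : Set γ}
    (hf : MonotoneOn f s) : IsChain (· ≤ ·) (f '' s) := by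
  rintro _ ⟨a, ha, rfl⟩ _ ⟨b, hb, rfl⟩ -
  rcases le_total a b with hab | hba
  · exact Or.inl (hf ha hb hab)
  · exact Or.inr (hf hb ha hba)

variable [Preorder β] [DecidableEq β] {f : α → β}

theorem card_filter_apply_eq_le_one {C : Finset α} (hf : StrictMono f)
    (hC : IsChain (· ≤ ·) (C : Set α)) (b : β) : #{x ∈ C | f x = b} ≤ 1 :=
  card_le_one.mpr fun _ hx _ hy =>
    hC.injOn_of_strictMono hf (mem_filter.mp hx).1 (mem_filter.mp hy).1
      ((mem_filter.mp hx).2.trans (mem_filter.mp hy).2.symm)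

variable [DecidableEq α]

theorem card_filter_union_apply_eq_le_two {C₁ C₂ : Finset α} (hf : StrictMono f)
    (hC₁ : IsChain (· ≤ ·) (C₁ : Set α)) (hC₂ : IsChain (· ≤ ·) (C₂ : Set α)) (b : β) :
    #{x ∈ C₁ ∪ C₂ | f x = b} ≤ 2 := by
  rw [filter_union]
  exact (card_union_le _ _).trans
    (add_le_add (card_filter_apply_eq_le_one hf hC₁ b) (card_filter_apply_eq_le_one hf hC₂ b))

theorem card_filter_union_apply_eq_le_one {C₁ C₂ : Finset α} (hf : StrictMono f)
    (hC₂ : IsChain (· ≤ ·) (C₂ : Set α)) {b : β} (hb : b ∉ f '' C₁) :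
    #{x ∈ C₁ ∪ C₂ | f x = b} ≤ 1 := by
  rw [filter_union, filter_false_of_mem fun x hx hfx => hb ⟨x, hx, hfx⟩, empty_union]
  exact card_filter_apply_eq_le_one hf hC₂ b

end Chain

theorem card_add_card_le_two_mul_of_card_fiber_le {α β : Type*} [DecidableEq β] {f : α → β}
    {U : Finset α} {S T : Finset β} (hU : (U : Set α).MapsTo f S) (hTS : T ⊆ S)
    (h₂ : ∀ b ∈ S, #{x ∈ U | f x = b} ≤ 2) (h₁ : ∀ b ∈ T, #{x ∈ U | f x = b} ≤ 1) :
    #U + #T ≤ 2 * #S := by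
  calc #U + #T = ∑ b ∈ S, (#{x ∈ U | f x = b} + if b ∈ T then 1 else 0) := by
        rw [sum_add_distrib, ← card_eq_sum_card_fiberwise hU, sum_ite_mem, inter_eq_right.mpr hTS,
          sum_const, smul_eq_mul, mul_one]
    _ ≤ ∑ _b ∈ S, 2 := sum_le_sum fun b hb => by
        split_ifs with hbT
        · exact Nat.add_le_of_le_sub (by norm_num) (h₁ b hbT)
        · exact h₂ b hb
    _ = 2 * #S := by rw [sum_const, smul_eq_mul, mul_comm]

section Weight

variable {ι : Type*} [Fintype ι] {m : ℕ}

def weight (r : ι → Fin m) : ℕ := ∑ i, (r i : ℕ)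

theorem weight_strictMono : StrictMono (weight : (ι → Fin m) → ℕ) := fun r s h => by
  obtain ⟨hle, i, hi⟩ := Pi.lt_def.mp h
  exact sum_lt_sum (fun j _ => hle j) ⟨i, mem_univ i, hi⟩

theorem apply_le_weight (r : ι → Fin m) (i : ι) : (r i : ℕ) ≤ weight r :=
  single_le_sum (f := fun j => (r j : ℕ)) (fun _ _ => Nat.zero_le _) (mem_univ i)

theorem weight_add_sum_sub_le (r : ι → Fin (m + 1)) (s : Finset ι) :
    weight r + ∑ i ∈ s, (m - r i) ≤ Fintype.card ι * m :=
  calc weight r + ∑ i ∈ s, (m - r i) ≤ ∑ i, (r i + (m - r i) : ℕ) := by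
        rw [sum_add_distrib]
        exact Nat.add_le_add_left (sum_le_sum_of_subset (subset_univ s)) _
    _ = Fintype.card ι * m := by
        rw [sum_congr rfl fun i _ => Nat.add_sub_cancel' (Nat.le_of_lt_succ (r i).isLt),
          sum_const, smul_eq_mul, card_univ]

theorem weight_le (r : ι → Fin (m + 1)) : weight r ≤ Fintype.card ι * m := by
  simpa using weight_add_sum_sub_le r ∅

variable [DecidableEq ι]

theorem apply_add_apply_le_weight (r : ι → Fin m) {i j : ι} (hij : i ≠ j) :
    (r i : ℕ) + r j ≤ weight r := by
  rw [← sum_pair (f := fun k => (r k : ℕ)) hij]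
  exact sum_le_sum_of_subset (subset_univ _)

theorem weight_eq_apply_add_sum_erase (r : ι → Fin m) (i : ι) :
    weight r = r i + ∑ j ∈ univ.erase i, (r j : ℕ) :=
  (add_sum_erase _ _ (mem_univ i)).symm

theorem apply_le_apply_add_one_of_le {r s : ι → Fin m} (hrs : r ≤ s)
    (hw : weight s ≤ weight r + 1) (i : ι) : (s i : ℕ) ≤ r i + 1 := by
  have hrest : ∑ j ∈ univ.erase i, (r j : ℕ) ≤ ∑ j ∈ univ.erase i, (s j : ℕ) :=
    sum_le_sum fun j _ => hrs j
  rw [weight_eq_apply_add_sum_erase r i, weight_eq_apply_add_sum_erase s i] at hw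
  omega

theorem eq_of_weight_eq_of_forall_ne {r s : ι → Fin m} (k : ι) (hw : weight r = weight s)
    (h : ∀ i ≠ k, r i = s i) : r = s := by
  have hrest : ∑ j ∈ univ.erase k, (r j : ℕ) = ∑ j ∈ univ.erase k, (s j : ℕ) :=
    sum_congr rfl fun j hj => by rw [h j (ne_of_mem_erase hj)]
  rw [weight_eq_apply_add_sum_erase r k, weight_eq_apply_add_sum_erase s k, hrest] at hw
  funext i
  by_cases hik : i = k
  · subst hik; exact Fin.ext (by omega)
  · exact h i hik

end Weight

namespace ValidB

variable {n : ℕ} {r r' : Fin n → Fin (n+1)}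

theorem add_sub_le (hr : ValidB n r) {i j : Fin n} (hij : i < j) (hj : (r j : ℕ) < n)
    (hji : (j : ℕ) - i ≤ r j) : (r i : ℕ) + (j - i) ≤ r j := by
  have := hr.1 i j hij hj hji
  omega

theorem apply_ne_sub (hr : ValidB n r) {i k : Fin n} (hik : i < k) (hi : 0 < (r i : ℕ)) :
    (r k : ℕ) ≠ k - i := by
  intro hk
  have := hr.add_sub_le hik (by omega) hk.ge
  omega

theorem apply_eq_of_le_weight_add_two (hn : 3 ≤ n) (hr : ValidB n r)
    (hw : n * n ≤ weight r + 2) {i : Fin n} (hi : (i : ℕ) ≠ 0) : (r i : ℕ) = n := by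
  by_contra hne
  obtain ⟨i', hi'⟩ : ∃ i' : Fin n, (i' : ℕ) = i - 1 := ⟨⟨i - 1, by omega⟩, rfl⟩
  have hlt : i' < i := Fin.lt_def.mpr (by omega)
  have hdef := weight_add_sum_sub_le r {i', i}
  rw [sum_pair hlt.ne, Fintype.card_fin] at hdef
  have := hr.add_sub_le hlt (by omega) (by omega)
  omega

theorem apply_eq_of_le_weight_add_three (hn : 4 ≤ n) (hr : ValidB n r)
    (hw : n * n ≤ weight r + 3) {c : Fin n} (hc : (c : ℕ) = n - 1) : (r c : ℕ) = n := by
  by_contra hne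
  obtain ⟨a, ha⟩ : ∃ a : Fin n, (a : ℕ) = n - 3 := ⟨⟨n - 3, by omega⟩, rfl⟩
  obtain ⟨b, hb⟩ : ∃ b : Fin n, (b : ℕ) = n - 2 := ⟨⟨n - 2, by omega⟩, rfl⟩
  have hab : a < b := Fin.lt_def.mpr (by omega)
  have hbc : b < c := Fin.lt_def.mpr (by omega)
  have hdef := weight_add_sum_sub_le r {a, b, c}
  rw [sum_insert (by simp [hab.ne, (hab.trans hbc).ne]), sum_pair hbc.ne, Fintype.card_fin] at hdef
  have hcn : (r c : ℕ) < n := lt_of_le_of_ne (Nat.le_of_lt_succ (r c).isLt) hne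
  obtain hc0 | hc1 | hc2 : (r c : ℕ) = 0 ∨ (r c : ℕ) = 1 ∨ 2 ≤ (r c : ℕ) := by omega
  · omega
  · have := hr.add_sub_le hbc hcn (by omega)
    omega
  · have := hr.add_sub_le hbc hcn (by omega)
    have := hr.add_sub_le (hab.trans hbc) hcn (by omega)
    omega

theorem eq_of_weight_eq (hn : 3 ≤ n) (hr : ValidB n r) (hr' : ValidB n r')
    (hw : weight r = weight r') (hlev : weight r = 0 ∨ n * n ≤ weight r + 2) : r = r' := by
  refine eq_of_weight_eq_of_forall_ne ⟨0, by omega⟩ hw fun i hi => Fin.ext ?_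
  have hi' : (i : ℕ) ≠ 0 := fun h => hi (Fin.ext h)
  rcases hlev with hzero | htop
  · have := apply_le_weight r i
    have := apply_le_weight r' i
    omega
  · rw [hr.apply_eq_of_le_weight_add_two hn htop hi',
      hr'.apply_eq_of_le_weight_add_two hn (hw ▸ htop) hi']

end ValidB

section UpperBound

variable {n : ℕ} {C : Set (Fin n → Fin (n+1))}

theorem apply_lt_sub_of_isChain (hC : IsChain (· ≤ ·) C) (hv : ∀ r ∈ C, ValidB n r) {N : ℕ}
    (hlev : Set.Icc 1 N ⊆ weight '' C) {x : Fin n → Fin (n+1)} (hx : x ∈ C) (hx1 : weight x = 1)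
    {j k : Fin n} (hjk : j < k) (hj : 0 < (x j : ℕ)) {z : Fin n → Fin (n+1)} (hz : z ∈ C)
    (hz1 : 1 ≤ weight z) (hzN : weight z ≤ N) : (z k : ℕ) < k - j := by
  have hjk' := Fin.lt_def.mp hjk
  suffices ∀ s, 1 ≤ s → s ≤ N → ∀ z ∈ C, weight z = s → (z k : ℕ) < k - j from
    this _ hz1 hzN z hz rfl
  intro s hs
  induction s, hs using Nat.le_induction with
  | base =>
    intro _ z hz hzw
    obtain rfl : z = x := hC.injOn_of_strictMono weight_strictMono hz hx (hzw.trans hx1.symm)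
    have := apply_add_apply_le_weight z hjk.ne'
    omega
  | succ s hs ih =>
    intro hsN z hz hzw
    obtain ⟨y, hy, hyw⟩ := hlev ⟨hs, by omega⟩
    have hyz : y ≤ z := hC.le_of_apply_le weight_strictMono hy hz (by omega)
    have hxz : x ≤ z := hC.le_of_apply_le weight_strictMono hx hz (by omega)
    have hstep := apply_le_apply_add_one_of_le hyz (by omega) k
    have hprev := ih (by omega) y hy hyw
    have hne := (hv z hz).apply_ne_sub hjk (lt_of_lt_of_le hj (hxz j))
    omega

theorem eq_sub_one_of_isChain (hn : 4 ≤ n) (hC : IsChain (· ≤ ·) C) (hv : ∀ r ∈ C, ValidB n r)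
    (hlev : Set.Icc 1 (n * n - 3) ⊆ weight '' C) {x : Fin n → Fin (n+1)} (hx : x ∈ C)
    (hx1 : weight x = 1) {j : Fin n} (hj : 0 < (x j : ℕ)) : (j : ℕ) = n - 1 := by
  have hxj := apply_le_weight x j
  by_contra hjn
  rcases Nat.eq_zero_or_pos j with hj0 | hj0
  -- condition (ii) at index `0` asks for an entry `∞`, but no entry exceeds the weight `1`
  · have hinf := (hv x hx).2 j (by omega) (by omega)
    have := apply_le_weight x ⟨n + j - x j, by omega⟩
    omega
  · have hsq : 16 ≤ n * n := Nat.mul_le_mul hn hn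
    obtain ⟨z, hz, hzw⟩ := hlev ⟨by omega, le_rfl⟩
    have htop := (hv z hz).apply_eq_of_le_weight_add_three hn (by omega)
      (c := ⟨n - 1, by omega⟩) rfl
    have := apply_lt_sub_of_isChain hC hv hlev hx hx1 (k := ⟨n - 1, by omega⟩)
      (Fin.lt_def.mpr (by simp only; omega)) hj hz (by omega) hzw.le
    omega

theorem card_filter_weight_eq_le_one_of_validB (hn : 3 ≤ n) {U : Finset (Fin n → Fin (n+1))}
    (hv : ∀ r ∈ U, ValidB n r) {t : ℕ} (ht : t = 0 ∨ n * n ≤ t + 2) :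
    #{x ∈ U | weight x = t} ≤ 1 := by
  refine card_le_one.mpr fun x hx y hy => ?_
  rw [mem_filter] at hx hy
  exact (hv x hx.1).eq_of_weight_eq hn (hv y hy.1) (hx.2.trans hy.2.symm) (hx.2 ▸ ht)

variable {C₁ C₂ : Finset (Fin n → Fin (n+1))}

theorem exists_card_filter_weight_eq_le_one (hn : 4 ≤ n)
    (hv₁ : ∀ r ∈ C₁, ValidB n r) (hv₂ : ∀ r ∈ C₂, ValidB n r)
    (hC₁ : IsChain (· ≤ ·) (C₁ : Set (Fin n → Fin (n+1))))
    (hC₂ : IsChain (· ≤ ·) (C₂ : Set (Fin n → Fin (n+1)))) :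
    ∃ s ∈ Icc 1 (n * n - 3), #{x ∈ C₁ ∪ C₂ | weight x = s} ≤ 1 := by
  by_contra! hfull
  have hlev₁ : Set.Icc 1 (n * n - 3) ⊆ weight '' (C₁ : Set (Fin n → Fin (n+1))) := fun s hs => by
    by_contra hs₁
    exact (hfull s (mem_Icc.mpr hs)).not_ge
      (card_filter_union_apply_eq_le_one weight_strictMono hC₂ hs₁)
  have hlev₂ : Set.Icc 1 (n * n - 3) ⊆ weight '' (C₂ : Set (Fin n → Fin (n+1))) := fun s hs => by
    by_contra hs₂
    rw [union_comm] at hfull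
    exact (hfull s (mem_Icc.mpr hs)).not_ge
      (card_filter_union_apply_eq_le_one weight_strictMono hC₁ hs₂)
  have hsupp : ∀ x ∈ C₁ ∪ C₂, weight x = 1 → ∀ i : Fin n, (i : ℕ) ≠ n - 1 → x i = 0 := by
    intro x hx hx1 i hi
    refine Fin.ext (Nat.eq_zero_of_not_pos fun hpos => hi ?_)
    rcases mem_union.mp hx with hx | hx
    · exact eq_sub_one_of_isChain hn hC₁ hv₁ hlev₁ hx hx1 hpos
    · exact eq_sub_one_of_isChain hn hC₂ hv₂ hlev₂ hx hx1 hpos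
  have hsq : 16 ≤ n * n := Nat.mul_le_mul hn hn
  refine (hfull 1 (mem_Icc.mpr ⟨le_rfl, by omega⟩)).not_ge (card_le_one.mpr fun x hx y hy => ?_)
  rw [mem_filter] at hx hy
  exact eq_of_weight_eq_of_forall_ne (⟨n - 1, by omega⟩ : Fin n) (hx.2.trans hy.2.symm)
    fun i hi => (hsupp x hx.1 hx.2 i fun h => hi (Fin.ext h)).trans
      (hsupp y hy.1 hy.2 i fun h => hi (Fin.ext h)).symm

theorem card_union_le (hn : 4 ≤ n)
    (hv₁ : ∀ r ∈ C₁, ValidB n r) (hv₂ : ∀ r ∈ C₂, ValidB n r)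
    (hC₁ : IsChain (· ≤ ·) (C₁ : Set (Fin n → Fin (n+1))))
    (hC₂ : IsChain (· ≤ ·) (C₂ : Set (Fin n → Fin (n+1)))) :
    #(C₁ ∪ C₂) ≤ 2 * n ^ 2 - 3 := by
  have hsq : 16 ≤ n * n := Nat.mul_le_mul hn hn
  have hv : ∀ r ∈ C₁ ∪ C₂, ValidB n r := fun r hr => (mem_union.mp hr).elim (hv₁ r) (hv₂ r)
  obtain ⟨s, hs, hs1⟩ := exists_card_filter_weight_eq_le_one hn hv₁ hv₂ hC₁ hC₂
  rw [mem_Icc] at hs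
  have hT : #({0, s, n * n - 2, n * n - 1, n * n} : Finset ℕ) = 5 := by
    rw [card_insert_of_notMem (by simp; omega), card_insert_of_notMem (by simp; omega),
      card_insert_of_notMem (by simp; omega), card_pair (by omega)]
  have hcount := card_add_card_le_two_mul_of_card_fiber_le (f := weight)
    (S := range (n * n + 1)) (T := {0, s, n * n - 2, n * n - 1, n * n})
    (fun x _ => mem_range.mpr (Nat.lt_succ_of_le (by simpa using weight_le x)))
    (by intro t; simp only [mem_insert, mem_singleton, mem_range]; omega)
    (fun t _ => card_filter_union_apply_eq_le_two weight_strictMono hC₁ hC₂ t)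
    (by
      intro t ht
      simp only [mem_insert, mem_singleton] at ht
      rcases ht with rfl | rfl | ht
      · exact card_filter_weight_eq_le_one_of_validB (by omega) hv (Or.inl rfl)
      · exact hs1
      · exact card_filter_weight_eq_le_one_of_validB (by omega) hv (Or.inr (by omega)))
  rw [hT, card_range] at hcount
  rw [sq]
  omega

end UpperBound

section Staircase

variable {n : ℕ}

def tuple (n : ℕ) (f : ℕ → ℕ) : Fin n → Fin (n+1) :=
  fun i => ⟨min n (f i), Nat.lt_succ_of_le (min_le_left _ _)⟩

theorem tuple_apply {f : ℕ → ℕ} {i : Fin n} (h : f i ≤ n) : (tuple n f i : ℕ) = f i :=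
  min_eq_right h

theorem tuple_le_tuple {f g : ℕ → ℕ} (h : ∀ i < n, f i ≤ g i) : tuple n f ≤ tuple n g :=
  fun i => Fin.le_def.mpr (min_le_min_left n (h i i.isLt))

theorem weight_tuple (f : ℕ → ℕ) : weight (tuple n f) = ∑ i ∈ range n, min n (f i) :=
  Fin.sum_univ_eq_sum_range (fun i => min n (f i)) n

theorem weight_tuple_of_le {f : ℕ → ℕ} (hf : ∀ i < n, f i ≤ n) :
    weight (tuple n f) = ∑ i ∈ range n, f i := by
  rw [weight_tuple]
  exact sum_congr rfl fun i hi => min_eq_right (hf i (mem_range.mp hi))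

theorem validB_tuple {f : ℕ → ℕ} (hf : ∀ i < n, f i ≤ n)
    (h₁ : ∀ i j, i < j → j < n → f j < n → j - i ≤ f j → f i + (j - i) ≤ f j)
    (h₂ : ∀ i < n, f i < n → i + 1 ≤ f i → f (n + i - f i) = n) : ValidB n (tuple n f) := by
  refine ⟨fun i j hij hj hji => ?_, fun i hi hi' => ?_⟩
  · rw [tuple_apply (hf i i.isLt), tuple_apply (hf j j.isLt)] at *
    have := h₁ i j hij j.isLt hj hji
    omega
  · rw [tuple_apply (hf i i.isLt)] at hi hi'
    simp only [tuple_apply (hf i i.isLt)]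
    rw [tuple_apply (hf _ (by omega))]
    exact h₂ i i.isLt hi hi'

def staircase (n m : ℕ) : Fin n → Fin (n+1) := tuple n fun i => min n (m - n * (n - 1 - i))

theorem monotone_staircase : Monotone (staircase n) :=
  fun _ _ h => tuple_le_tuple fun _ _ => min_le_min_left n (Nat.sub_le_sub_right h _)

theorem weight_staircase (m : ℕ) : weight (staircase n m) = min (n * n) m := by
  have hblocks : ∀ k, ∑ q ∈ range k, min n (m - n * q) = min (n * k) m := by
    intro k
    induction k with
    | zero => simp
    | succ k ih =>
      rw [sum_range_succ, ih, Nat.mul_succ]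
      omega
  rw [staircase, weight_tuple, ← hblocks n]
  simp only [← min_assoc, min_self]
  exact sum_range_reflect (fun q => min n (m - n * q)) n

theorem validB_staircase (m : ℕ) : ValidB n (staircase n m) := by
  refine validB_tuple (fun _ _ => min_le_left _ _) (fun i j hij hj hjn _ => ?_)
    (fun i hi hin hi1 => ?_)
  · have hmul : n * (n - 1 - j) + n ≤ n * (n - 1 - i) := by
      rw [← Nat.mul_succ]; exact Nat.mul_le_mul_left n (by omega)
    omega
  · set v := min n (m - n * (n - 1 - i))
    have hmul : n * (n - 1 - (n + i - v)) + n ≤ n * (n - 1 - i) := by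
      rw [← Nat.mul_succ]; exact Nat.mul_le_mul_left n (by omega)
    omega

theorem staircase_apply_succ (m : ℕ) {i j : Fin n} (hij : (i : ℕ) + 1 = j)
    (hi : 0 < (staircase n m i : ℕ)) : (staircase n m j : ℕ) = n := by
  have hmul : n * (n - 1 - i) = n * (n - 1 - j) + n := by
    rw [← Nat.mul_succ]; congr 1; omega
  simp only [staircase, tuple] at hi ⊢
  omega

end Staircase

section SecondChain

variable {n : ℕ}

theorem sum_range_eq_of_window (F : ℕ → ℕ) {k : ℕ} (hk : k + 3 ≤ n) (h0 : ∀ i < k, F i = 0)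
    (htop : ∀ i, k + 3 ≤ i → i < n → F i = n) :
    ∑ i ∈ range n, F i = F k + F (k + 1) + F (k + 2) + (n - (k + 3)) * n := by
  rw [range_eq_Ico, ← sum_Ico_consecutive F (Nat.zero_le (k + 3)) hk, ← range_eq_Ico,
    sum_range_succ, sum_range_succ, sum_range_succ,
    sum_eq_zero fun i hi => h0 i (mem_range.mp hi),
    sum_congr rfl fun i hi => htop i (mem_Ico.mp hi).1 (mem_Ico.mp hi).2,
    sum_const, Nat.card_Ico, smul_eq_mul, zero_add]

/- By weight `w`, the second chain runs through `(…,0,1,0)`, then `(…,0,1,w-1)` up to `w = n` and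
`(…,0,w-n+1,n-1)` up to `w = 2n-3` (`lowVal`). From `w = 2n-2 + nq + t` with `t < n` on, a window
at positions `n-3-q, n-2-q, n-1-q`, with zeros before it and `∞ = n` after it, runs through
`(1,n-2,n-1), (1,n-2,n), (1,n-1,n), (2,n-1,n), …, (n-2,n-1,n)` (`highVal`). -/
def lowVal (n s i : ℕ) : ℕ :=
  if i + 2 = n then (if s ≤ n then 1 else s - n + 1)
  else if i + 1 = n then (if s ≤ n then s - 1 else n - 1)
  else 0

def highVal (n q t i : ℕ) : ℕ :=
  if i + q + 3 < n then 0
  else if i + q + 3 = n then (if t ≤ 1 then 1 else t - 1)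
  else if i + q + 2 = n then (if t ≤ 1 then n - 2 else n - 1)
  else if i + q + 1 = n then (if t = 0 then n - 1 else n)
  else n

section LowVal

variable {s : ℕ}

theorem lowVal_le (hs : s ≤ 2 * n - 3) (i : ℕ) : lowVal n s i ≤ n := by
  unfold lowVal; split_ifs <;> omega

theorem sum_range_lowVal (hn : 3 ≤ n) (hs1 : 1 ≤ s) :
    ∑ i ∈ range n, lowVal n s i = s := by
  rw [sum_range_eq_of_window _ (k := n - 3) (by omega)
    (fun i hi => by unfold lowVal; split_ifs <;> omega) (fun i _ _ => by omega),
    show n - (n - 3 + 3) = 0 by omega, zero_mul]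
  unfold lowVal; split_ifs <;> omega

theorem validB_tuple_lowVal (hn : 3 ≤ n) (hs1 : 1 ≤ s) (hs : s ≤ 2 * n - 3) (hs2 : s ≠ 2) :
    ValidB n (tuple n (lowVal n s)) := by
  refine validB_tuple (fun i _ => lowVal_le hs i) (fun i j hij hj hjn hji => ?_)
    (fun i hi hin hi1 => absurd hi1 ?_)
  · unfold lowVal at *; split_ifs at * <;> omega
  · unfold lowVal at *; split_ifs at * <;> omega

theorem lowVal_mono {s' : ℕ} (h : s ≤ s') (hs1 : 1 ≤ s) (i : ℕ) :
    lowVal n s i ≤ lowVal n s' i := by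
  unfold lowVal; split_ifs <;> omega

theorem exists_lowVal_pos_lowVal_succ_lt (hn : 3 ≤ n) :
    ∃ i, i + 1 < n ∧ 0 < lowVal n s i ∧ lowVal n s (i + 1) < n :=
  ⟨n - 2, by omega, by unfold lowVal; split_ifs <;> omega, by unfold lowVal; split_ifs <;> omega⟩

end LowVal

section HighVal

variable {q t : ℕ}

theorem highVal_le (ht : t < n) (i : ℕ) : highVal n q t i ≤ n := by
  unfold highVal; split_ifs <;> omega

theorem sum_range_highVal (hn : 3 ≤ n) (hq : q ≤ n - 3) (ht : t < n) :
    ∑ i ∈ range n, highVal n q t i = 2 * n - 2 + n * q + t := by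
  rw [sum_range_eq_of_window _ (k := n - 3 - q) (by omega)
    (fun i hi => by unfold highVal; split_ifs <;> omega)
    (fun i h1 h2 => by unfold highVal; split_ifs <;> omega),
    show n - (n - 3 - q + 3) = q by omega, mul_comm q n]
  have h₀ : highVal n q t (n - 3 - q) = if t ≤ 1 then 1 else t - 1 := by
    rw [highVal, if_neg (by omega), if_pos (by omega)]
  have h₁ : highVal n q t (n - 3 - q + 1) = if t ≤ 1 then n - 2 else n - 1 := by
    rw [highVal, if_neg (by omega), if_neg (by omega), if_pos (by omega)]
  have h₂ : highVal n q t (n - 3 - q + 2) = if t = 0 then n - 1 else n := by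
    rw [highVal, if_neg (by omega), if_neg (by omega), if_neg (by omega), if_pos (by omega)]
  rw [h₀, h₁, h₂]
  split_ifs <;> omega

set_option maxHeartbeats 400000 in
theorem validB_tuple_highVal (hn : 4 ≤ n) (ht : t < n) :
    ValidB n (tuple n (highVal n q t)) := by
  refine validB_tuple (fun i _ => highVal_le ht i) (fun i j hij hj hjn hji => ?_)
    (fun i hi hin hi1 => ?_)
  · unfold highVal at hjn hji ⊢; split_ifs at hjn hji ⊢ <;> omega
  · generalize hv : highVal n q t i = v at hin hi1
    unfold highVal at hv ⊢; split_ifs at hv ⊢ <;> omega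

theorem highVal_mono {q' t' : ℕ} (ht : t < n) (ht' : t' < n) (h : q < q' ∨ q = q' ∧ t ≤ t')
    (i : ℕ) : highVal n q t i ≤ highVal n q' t' i := by
  unfold highVal; split_ifs <;> omega

theorem exists_highVal_pos_highVal_succ_lt (hn : 3 ≤ n) (hq : q ≤ n - 3) :
    ∃ i, i + 1 < n ∧ 0 < highVal n q t i ∧ highVal n q t (i + 1) < n :=
  ⟨n - 3 - q, by omega, by unfold highVal; split_ifs <;> omega,
    by unfold highVal; split_ifs <;> omega⟩

end HighVal

theorem lowVal_le_highVal {s q t : ℕ} (hn : 3 ≤ n) (hs : s ≤ 2 * n - 3) (hq : q ≤ n - 3)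
    (i : ℕ) : lowVal n s i ≤ highVal n q t i := by
  unfold lowVal highVal; split_ifs <;> omega

theorem lt_or_eq_and_le_of_mul_add_le {q t q' t' : ℕ} (h : n * q + t ≤ n * q' + t') (ht' : t' < n) :
    q < q' ∨ q = q' ∧ t ≤ t' := by
  rcases lt_trichotomy q q' with hlt | rfl | hgt
  · exact Or.inl hlt
  · exact Or.inr ⟨rfl, by omega⟩
  · have := Nat.mul_le_mul_left n (Nat.succ_le_of_lt hgt)
    rw [Nat.mul_succ] at this
    omega

def secondVal (n w : ℕ) : ℕ → ℕ :=
  if w < 2 * n - 2 then lowVal n w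
  else highVal n ((w - (2 * n - 2)) / n) ((w - (2 * n - 2)) % n)

theorem secondVal_cases (hn : 4 ≤ n) {w : ℕ} (hw : w ≤ n * n - 3) :
    (w < 2 * n - 2 ∧ secondVal n w = lowVal n w) ∨
      ∃ q t, q ≤ n - 3 ∧ t < n ∧ w = 2 * n - 2 + n * q + t ∧ secondVal n w = highVal n q t := by
  unfold secondVal
  split_ifs with h
  · exact Or.inl ⟨h, rfl⟩
  · have hq : (w - (2 * n - 2)) / n < n - 2 := by
      rw [Nat.div_lt_iff_lt_mul (by omega), Nat.sub_mul]
      omega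
    have := Nat.div_add_mod (w - (2 * n - 2)) n
    exact Or.inr ⟨_, _, by omega, Nat.mod_lt _ (by omega), by omega, rfl⟩

theorem secondVal_le (hn : 4 ≤ n) {w : ℕ} (hw : w ≤ n * n - 3) (i : ℕ) : secondVal n w i ≤ n := by
  rcases secondVal_cases hn hw with ⟨hlt, he⟩ | ⟨q, t, -, ht, -, he⟩ <;> rw [he]
  · exact lowVal_le (by omega) i
  · exact highVal_le ht i

def secondElt (n w : ℕ) : Fin n → Fin (n+1) := tuple n (secondVal n w)

theorem weight_secondElt (hn : 4 ≤ n) {w : ℕ} (hw1 : 1 ≤ w) (hw : w ≤ n * n - 3) :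
    weight (secondElt n w) = w := by
  rw [secondElt, weight_tuple_of_le fun i _ => secondVal_le hn hw i]
  rcases secondVal_cases hn hw with ⟨-, he⟩ | ⟨q, t, hq, ht, rfl, he⟩ <;> rw [he]
  · exact sum_range_lowVal (by omega) hw1
  · exact sum_range_highVal (by omega) hq ht

def secondLevels (n : ℕ) : Finset ℕ := insert 1 (Icc 3 (n * n - 3))

theorem mem_secondLevels (hn : 4 ≤ n) {w : ℕ} :
    w ∈ secondLevels n ↔ 1 ≤ w ∧ w ≤ n * n - 3 ∧ w ≠ 2 := by
  have : 16 ≤ n * n := Nat.mul_le_mul hn hn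
  simp only [secondLevels, mem_insert, mem_Icc]
  constructor <;> intro h <;> omega

theorem validB_secondElt (hn : 4 ≤ n) {w : ℕ} (hw : w ∈ secondLevels n) :
    ValidB n (secondElt n w) := by
  obtain ⟨hw1, hw, hw2⟩ := (mem_secondLevels hn).mp hw
  rcases secondVal_cases hn hw with ⟨hlt, he⟩ | ⟨q, t, -, ht, -, he⟩ <;> rw [secondElt, he]
  · exact validB_tuple_lowVal (by omega) hw1 (by omega) hw2
  · exact validB_tuple_highVal hn ht

theorem monotoneOn_secondElt (hn : 4 ≤ n) : MonotoneOn (secondElt n) (Set.Icc 1 (n * n - 3)) := by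
  rintro w ⟨hw1, hw⟩ w' ⟨-, hw'⟩ hww'
  refine tuple_le_tuple fun i _ => ?_
  rcases secondVal_cases hn hw with ⟨hlt, he⟩ | ⟨q, t, hq, ht, rfl, he⟩ <;>
    rcases secondVal_cases hn hw' with ⟨hlt', he'⟩ | ⟨q', t', hq', ht', rfl, he'⟩ <;>
    rw [he, he']
  · exact lowVal_mono hww' hw1 i
  · exact lowVal_le_highVal (by omega) (by omega) hq' i
  · omega
  · have hlex := lt_or_eq_and_le_of_mul_add_le (n := n) (q := q) (t := t) (q' := q') (by omega) ht'
    exact highVal_mono ht ht' hlex i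

theorem staircase_ne_secondElt (hn : 4 ≤ n) (m : ℕ) {w : ℕ} (hw : w ≤ n * n - 3) :
    staircase n m ≠ secondElt n w := by
  obtain ⟨i, hi, hpos, hlt⟩ :
      ∃ i, i + 1 < n ∧ 0 < secondVal n w i ∧ secondVal n w (i + 1) < n := by
    rcases secondVal_cases hn hw with ⟨-, he⟩ | ⟨q, t, hq, -, -, he⟩ <;> rw [he]
    · exact exists_lowVal_pos_lowVal_succ_lt (by omega)
    · exact exists_highVal_pos_highVal_succ_lt (by omega) hq
  intro h
  have hval : ∀ j : Fin n, (staircase n m j : ℕ) = secondVal n w j := fun j => by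
    rw [h, secondElt, tuple_apply (secondVal_le hn hw j)]
  have := staircase_apply_succ m (i := ⟨i, by omega⟩) (j := ⟨i + 1, hi⟩) rfl
    (by rw [hval]; exact hpos)
  rw [hval] at this
  exact hlt.ne this

def staircaseChain (n : ℕ) : Finset (Fin n → Fin (n+1)) := (range (n * n + 1)).image (staircase n)

def secondChain (n : ℕ) : Finset (Fin n → Fin (n+1)) := (secondLevels n).image (secondElt n)

theorem card_staircaseChain : #(staircaseChain n) = n * n + 1 := by
  rw [staircaseChain, card_image_of_injOn, card_range]
  refine Set.LeftInvOn.injOn (f₁' := weight) fun m hm => ?_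
  rw [weight_staircase, min_eq_right (Nat.le_of_lt_succ (mem_range.mp hm))]

theorem card_secondChain (hn : 4 ≤ n) : #(secondChain n) = n * n - 4 := by
  rw [secondChain, card_image_of_injOn]
  · rw [secondLevels, card_insert_of_notMem (by simp), Nat.card_Icc]
    have : 16 ≤ n * n := Nat.mul_le_mul hn hn
    omega
  · refine Set.LeftInvOn.injOn (f₁' := weight) fun w hw => ?_
    obtain ⟨hw1, hw, -⟩ := (mem_secondLevels hn).mp hw
    exact weight_secondElt hn hw1 hw

theorem exists_chains_card_union_eq (hn : 4 ≤ n) :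
    ∃ C₁ C₂ : Finset (Fin n → Fin (n+1)),
      (∀ r ∈ C₁, ValidB n r) ∧ (∀ r ∈ C₂, ValidB n r) ∧
      IsChain (· ≤ ·) (C₁ : Set (Fin n → Fin (n+1))) ∧
      IsChain (· ≤ ·) (C₂ : Set (Fin n → Fin (n+1))) ∧
      #(C₁ ∪ C₂) = 2 * n ^ 2 - 3 := by
  refine ⟨staircaseChain n, secondChain n, ?_, ?_, ?_, ?_, ?_⟩
  · simp only [staircaseChain, mem_image]
    rintro _ ⟨m, -, rfl⟩
    exact validB_staircase m
  · simp only [secondChain, mem_image]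
    rintro _ ⟨w, hw, rfl⟩
    exact validB_secondElt hn hw
  · rw [staircaseChain, coe_image]
    exact isChain_image_of_monotoneOn (monotone_staircase.monotoneOn _)
  · rw [secondChain, coe_image]
    refine isChain_image_of_monotoneOn ((monotoneOn_secondElt hn).mono fun w hw => ?_)
    obtain ⟨hw1, hw, -⟩ := (mem_secondLevels hn).mp hw
    exact ⟨hw1, hw⟩
  · have hdisj : Disjoint (staircaseChain n) (secondChain n) := by
      simp only [disjoint_left, staircaseChain, secondChain, mem_image, not_exists, not_and]
      rintro _ ⟨m, -, rfl⟩ w hw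
      exact (staircase_ne_secondElt hn m ((mem_secondLevels hn).mp hw).2.1).symm
    have : 16 ≤ n * n := Nat.mul_le_mul hn hn
    rw [card_union_of_disjoint hdisj, card_staircaseChain, card_secondChain hn, sq]
    omega

end SecondChain

theorem lambda_one_plus_lambda_two (n : ℕ) (hn : 4 ≤ n) :
    (∃ C₁ C₂ : Finset (Fin n → Fin (n+1)),
      (∀ r ∈ C₁, ValidB n r) ∧ (∀ r ∈ C₂, ValidB n r) ∧
      IsChain (· ≤ ·) (C₁ : Set (Fin n → Fin (n+1))) ∧
      IsChain (· ≤ ·) (C₂ : Set (Fin n → Fin (n+1))) ∧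
      (C₁ ∪ C₂).card = 2 * n ^ 2 - 3) ∧
    (∀ C₁ C₂ : Finset (Fin n → Fin (n+1)),
      (∀ r ∈ C₁, ValidB n r) → (∀ r ∈ C₂, ValidB n r) →
      IsChain (· ≤ ·) (C₁ : Set (Fin n → Fin (n+1))) →
      IsChain (· ≤ ·) (C₂ : Set (Fin n → Fin (n+1))) →
      (C₁ ∪ C₂).card ≤ 2 * n ^ 2 - 3) :=
  ⟨exists_chains_card_union_eq hn, fun _ _ hv₁ hv₂ hC₁ hC₂ => card_union_le hn hv₁ hv₂ hC₁ hC₂⟩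
end
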